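/- Let T be a bounded normal operator on a complex Hilbert space H, and suppose σ(T) = K₁ ∪ K₂ where K₁ and K₂ are nonempty closed sets for which there exists ε > 0 with |λ₁ − λ₂| > ε for all λ₁ ∈ K₁ and λ₂ ∈ K₂. Then there exist closed subspaces V₁ and V₂ of H with V₂ = V₁^⊥, each invariant under both T and T*, such that the spectrum of the restriction of T to Vᵢ equals Kᵢ for i = 1, 2, and moreover the orthogonal projection of H onto V₁ lies in the norm-closed unital *-subalgebra of bounded operators generated by T. -/

import Mathlib

/-- The restriction of a continuous linear map to an invariant submodule,
as a continuous linear map on the submodule. -/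
def clmRestrict {H : Type*} [NormedAddCommGroup H] [InnerProductSpace ℂ H]
    (T : H →L[ℂ] H) (V : Submodule ℂ H) (hV : ∀ x ∈ V, T x ∈ V) : V →L[ℂ] V where
  toLinearMap := T.toLinearMap.restrict hV
  cont := Continuous.subtype_mk (T.continuous.comp continuous_subtype_val) _

/-!
As `K₁` and `K₂` are disjoint closed sets covering `σ(T)`, the indicator of `K₁` is continuous on
`σ(T)`, so `P = 1_{K₁}(T)` is a self-adjoint idempotent in `C*(T)` commuting with `T` and `T*`, and
`1 - P = 1_{K₂}(T)`. Their ranges `V₁` and `V₂ = V₁ᗮ` therefore reduce `T`. For `μ ∉ K₁` the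
function `1_{K₁}(z) (μ - z)⁻¹` is again continuous on `σ(T)`, and its image under the functional
calculus inverts `μ - T` on `V₁`; hence `σ(T|V₁) ⊆ K₁`, and likewise `σ(T|V₂) ⊆ K₂`. Since `T` is
the direct sum of its two restrictions, `σ(T) ⊆ σ(T|V₁) ∪ σ(T|V₂)`, and disjointness of `K₁`, `K₂`
turns the two inclusions into equalities.
-/

lemma ContinuousOn.indicator_union_of_isClosed {X M : Type*} [TopologicalSpace X] [Zero M]
    [TopologicalSpace M] {K L : Set X} {g : X → M} (hg : ContinuousOn g K)
    (hK : IsClosed K) (hL : IsClosed L) (hKL : Disjoint K L) :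
    ContinuousOn (K.indicator g) (K ∪ L) :=
  (hg.congr fun _ hx ↦ Set.indicator_of_mem hx g).union_of_isClosed
    (continuousOn_const.congr fun _ hx ↦ Set.indicator_of_notMem (hKL.notMem_of_mem_right hx) g)
    hK hL

lemma Set.eq_and_eq_of_union_subset_union {α : Type*} {A B K L : Set α} (hA : A ⊆ K)
    (hB : B ⊆ L) (hKL : Disjoint K L) (h : K ∪ L ⊆ A ∪ B) : A = K ∧ B = L := by
  rw [Set.disjoint_left] at hKL
  refine ⟨hA.antisymm fun z hz ↦ ?_, hB.antisymm fun z hz ↦ ?_⟩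
  · exact (h (.inl hz)).resolve_right fun hzB ↦ hKL hz (hB hzB)
  · exact (h (.inr hz)).resolve_left fun hzA ↦ hKL (hA hzA) hz

lemma Commute.apply_mem_range {R M : Type*} [Semiring R] [TopologicalSpace M] [AddCommMonoid M]
    [Module R M] {A P : M →L[R] M} (h : Commute A P) {x : M} (hx : x ∈ P.range) :
    A x ∈ P.range := by
  obtain ⟨y, rfl⟩ := hx
  exact ⟨A y, congrArg (· y) h.eq.symm⟩

namespace ContinuousLinearMap.IsIdempotentElem

variable {R M : Type*} [Ring R] [TopologicalSpace M] [AddCommGroup M] [IsTopologicalAddGroup M]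
  [Module R M] {P : M →L[R] M}

lemma ker_eq_range_one_sub (hP : IsIdempotentElem P) : P.ker = (1 - P : M →L[R] M).range :=
  LinearMap.IsIdempotentElem.ker_eq_range_one_sub (toLinearMap hP)

lemma isCompl_range_range_one_sub (hP : IsIdempotentElem P) :
    IsCompl P.range (1 - P : M →L[R] M).range :=
  ker_eq_range_one_sub hP ▸ LinearMap.IsIdempotentElem.isCompl (toLinearMap hP)

end ContinuousLinearMap.IsIdempotentElem

section CFC

variable {A : Type*} [CStarAlgebra A] (a : A)

lemma isStarProjection_cfc_indicator_one {K : Set ℂ}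
    (hK : ContinuousOn (K.indicator (1 : ℂ → ℂ)) (spectrum ℂ a)) :
    IsStarProjection (cfc (K.indicator (1 : ℂ → ℂ)) a) := by
  refine ⟨?_, ?_⟩
  · rw [IsIdempotentElem, ← cfc_mul _ _ a hK hK]
    refine cfc_congr fun z _ ↦ ?_
    by_cases hz : z ∈ K <;> simp [hz]
  · rw [IsSelfAdjoint, ← cfc_star]
    refine cfc_congr fun z _ ↦ ?_
    by_cases hz : z ∈ K <;> simp [hz]

variable [IsStarNormal a]

lemma cfc_indicator_one_add_cfc_indicator_one {K L : Set ℂ} (hKL : Disjoint K L)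
    (hσ : spectrum ℂ a = K ∪ L) (hK : ContinuousOn (K.indicator (1 : ℂ → ℂ)) (spectrum ℂ a))
    (hL : ContinuousOn (L.indicator (1 : ℂ → ℂ)) (spectrum ℂ a)) :
    cfc (K.indicator (1 : ℂ → ℂ)) a + cfc (L.indicator (1 : ℂ → ℂ)) a = 1 := by
  rw [← cfc_add (a := a) _ _ hK hL, ← cfc_one ℂ a]
  refine cfc_congr fun z hz ↦ ?_
  rw [hσ] at hz
  rcases hz with hz | hz
  · simp [hz, hKL.notMem_of_mem_left hz]
  · simp [hz, hKL.notMem_of_mem_right hz]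

lemma algebraMap_sub_mul_cfc_indicator_inv {K : Set ℂ} {μ : ℂ} (hμ : μ ∉ K)
    (hg : ContinuousOn (K.indicator fun z ↦ (μ - z)⁻¹) (spectrum ℂ a)) :
    (algebraMap ℂ A μ - a) * cfc (K.indicator fun z ↦ (μ - z)⁻¹) a =
      cfc (K.indicator (1 : ℂ → ℂ)) a := by
  have hsub : cfc (fun z ↦ μ - z) a = algebraMap ℂ A μ - a := by
    rw [cfc_sub _ _ a, cfc_const μ a, cfc_id' ℂ a]
  rw [← hsub, ← cfc_mul _ _ a]
  refine cfc_congr fun z _ ↦ ?_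
  by_cases hz : z ∈ K
  · simp [hz, sub_ne_zero.mpr (ne_of_mem_of_not_mem hz hμ).symm]
  · simp [hz]

lemma commute_cfc_self (f : ℂ → ℂ) : Commute a (cfc f a) :=
  (Commute.cfc (.refl a) star_comm_self f).symm

lemma commute_star_cfc_self (f : ℂ → ℂ) : Commute (star a) (cfc f a) :=
  (Commute.cfc star_comm_self.symm (.refl _) f).symm

end CFC

section Restrict

variable {H : Type*} [NormedAddCommGroup H] [InnerProductSpace ℂ H]

@[simp]
lemma clmRestrict_apply (T : H →L[ℂ] H) (V : Submodule ℂ H) (hV : ∀ x ∈ V, T x ∈ V) (x : V) :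
    (clmRestrict T V hV x : H) = T x :=
  rfl

lemma algebraMap_sub_clmRestrict (T : H →L[ℂ] H) (V : Submodule ℂ H) (hV : ∀ x ∈ V, T x ∈ V)
    (μ : ℂ) :
    algebraMap ℂ (V →L[ℂ] V) μ - clmRestrict T V hV =
      clmRestrict (algebraMap ℂ (H →L[ℂ] H) μ - T) V (fun x (hx : x ∈ V) ↦ by
        simpa [Algebra.algebraMap_eq_smul_one] using V.sub_mem (V.smul_mem μ hx) (hV x hx)) := by
  ext x
  simp [Algebra.algebraMap_eq_smul_one]

lemma isUnit_clmRestrict_range {A B P : H →L[ℂ] H} (hP : IsIdempotentElem P) (hAB : A * B = P)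
    (hBA : B * A = P) (hA : ∀ x ∈ P.range, A x ∈ P.range) :
    IsUnit (clmRestrict A P.range hA) := by
  have hBP : Commute B P :=
    calc B * P = B * A * B := by rw [mul_assoc, hAB]
      _ = P * B := by rw [hBA]
  have hPx : ∀ x ∈ P.range, P x = x := fun _ ↦
    (LinearMap.IsIdempotentElem.mem_range_iff
      (ContinuousLinearMap.IsIdempotentElem.toLinearMap hP)).mp
  refine isUnit_iff_exists.mpr ⟨clmRestrict B _ fun x ↦ hBP.apply_mem_range, ?_, ?_⟩ <;>
    ext ⟨x, hx⟩
  · exact (congrArg (· x) hAB).trans (hPx x hx)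
  · exact (congrArg (· x) hBA).trans (hPx x hx)

lemma isUnit_of_isUnit_clmRestrict [CompleteSpace H] {A : H →L[ℂ] H} {V W : Submodule ℂ H}
    (hVW : IsCompl V W) {hV : ∀ x ∈ V, A x ∈ V} {hW : ∀ x ∈ W, A x ∈ W}
    (h₁ : IsUnit (clmRestrict A V hV)) (h₂ : IsUnit (clmRestrict A W hW)) : IsUnit A := by
  let e := V.prodEquivOfIsCompl W hVW
  have hA : ⇑A = e ∘ Prod.map (clmRestrict A V hV) (clmRestrict A W hW) ∘ e.symm := by
    ext x
    obtain ⟨p, rfl⟩ := e.surjective x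
    simp [e, Submodule.coe_prodEquivOfIsCompl']
  have bij {U : Submodule ℂ H} {f : U →L[ℂ] U} (hf : IsUnit f) : Function.Bijective f :=
    (ContinuousLinearEquiv.unitsEquiv ℂ U hf.unit).bijective
  rw [ContinuousLinearMap.isUnit_iff_bijective, hA]
  exact e.bijective.comp ((bij h₁).prodMap (bij h₂)) |>.comp e.symm.bijective

lemma spectrum_subset_union_spectrum_clmRestrict [CompleteSpace H] {T : H →L[ℂ] H}
    {V W : Submodule ℂ H} (hVW : IsCompl V W) (hV : ∀ x ∈ V, T x ∈ V) (hW : ∀ x ∈ W, T x ∈ W) :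
    spectrum ℂ T ⊆ spectrum ℂ (clmRestrict T V hV) ∪ spectrum ℂ (clmRestrict T W hW) := by
  intro μ hμ
  by_contra h
  simp only [Set.mem_union, spectrum.mem_iff, not_or, not_not,
    algebraMap_sub_clmRestrict] at h
  exact hμ (isUnit_of_isUnit_clmRestrict hVW h.1 h.2)

lemma IsStarProjection.range_one_sub [CompleteSpace H] {P : H →L[ℂ] H}
    (hP : IsStarProjection P) : (1 - P).range = P.rangeᗮ := by
  rw [ContinuousLinearMap.IsStarNormal.orthogonal_range hP.isStarNormal,
    ContinuousLinearMap.IsIdempotentElem.ker_eq_range_one_sub hP.isIdempotentElem]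

variable [CompleteSpace H] (T : H →L[ℂ] H) [IsStarNormal T]

lemma spectrum_clmRestrict_range_cfc_indicator_subset {K L : Set ℂ} (hK : IsClosed K)
    (hL : IsClosed L) (hKL : Disjoint K L) (hσ : spectrum ℂ T = K ∪ L)
    (hV : ∀ x ∈ (cfc (K.indicator (1 : ℂ → ℂ)) T).range,
      T x ∈ (cfc (K.indicator (1 : ℂ → ℂ)) T).range) :
    spectrum ℂ (clmRestrict T _ hV) ⊆ K := by
  intro μ hμ
  by_contra hμK
  have hg : ContinuousOn (K.indicator fun z ↦ (μ - z)⁻¹) (spectrum ℂ T) :=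
    hσ ▸ ContinuousOn.indicator_union_of_isClosed (fun z hz ↦
      ((continuousAt_const.sub continuousAt_id).inv₀
        (sub_ne_zero.mpr (ne_of_mem_of_not_mem hz hμK).symm)).continuousWithinAt) hK hL hKL
  have hP := isStarProjection_cfc_indicator_one T
    (hσ ▸ continuousOn_const.indicator_union_of_isClosed hK hL hKL)
  have hAB := algebraMap_sub_mul_cfc_indicator_inv T hμK hg
  have hBA : Commute (cfc (K.indicator fun z ↦ (μ - z)⁻¹) T) (algebraMap ℂ _ μ - T) :=
    (Algebra.commute_algebraMap_right μ _).sub_right (commute_cfc_self T _).symm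
  rw [spectrum.mem_iff, algebraMap_sub_clmRestrict] at hμ
  exact hμ (isUnit_clmRestrict_range hP.isIdempotentElem hAB (hBA.eq.trans hAB) _)

end Restrict

theorem exists_reducing_decomposition_of_separated_spectrum_general {H : Type*}
    [NormedAddCommGroup H] [InnerProductSpace ℂ H] [CompleteSpace H]
    (T : H →L[ℂ] H) (hT : IsStarNormal T)
    (K₁ K₂ : Set ℂ)
    (hK₁c : IsClosed K₁) (hK₂c : IsClosed K₂)
    (hσ : spectrum ℂ T = K₁ ∪ K₂)
    (ε : ℝ) (hε : 0 < ε) (hsep : ∀ μ₁ ∈ K₁, ∀ μ₂ ∈ K₂, ε < ‖μ₁ - μ₂‖) :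
    ∃ (V₁ V₂ : Submodule ℂ H) (hV₁T : ∀ x ∈ V₁, T x ∈ V₁) (hV₂T : ∀ x ∈ V₂, T x ∈ V₂),
      IsClosed (V₁ : Set H) ∧ IsClosed (V₂ : Set H) ∧ V₂ = V₁ᗮ ∧
      (∀ x ∈ V₁, ContinuousLinearMap.adjoint T x ∈ V₁) ∧
      (∀ x ∈ V₂, ContinuousLinearMap.adjoint T x ∈ V₂) ∧
      spectrum ℂ (clmRestrict T V₁ hV₁T) = K₁ ∧
      spectrum ℂ (clmRestrict T V₂ hV₂T) = K₂ ∧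
      ∃ P : H →L[ℂ] H, (∀ x : H, P x ∈ V₁ ∧ x - P x ∈ V₁ᗮ) ∧
        P ∈ (StarAlgebra.adjoin ℂ {T}).topologicalClosure := by
  have hdisj : Disjoint K₁ K₂ := Set.disjoint_left.mpr fun z h₁ h₂ ↦ by
    simpa using hε.trans (hsep z h₁ z h₂)
  have hσ' : spectrum ℂ T = K₂ ∪ K₁ := hσ.trans (Set.union_comm _ _)
  have hind {K L : Set ℂ} (hK : IsClosed K) (hL : IsClosed L) (hKL : Disjoint K L)
      (h : spectrum ℂ T = K ∪ L) : ContinuousOn (K.indicator (1 : ℂ → ℂ)) (spectrum ℂ T) :=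
    h ▸ continuousOn_const.indicator_union_of_isClosed hK hL hKL
  set P := cfc (K₁.indicator (1 : ℂ → ℂ)) T
  set Q := cfc (K₂.indicator (1 : ℂ → ℂ)) T
  have hP : IsStarProjection P := isStarProjection_cfc_indicator_one T (hind hK₁c hK₂c hdisj hσ)
  have hQ : Q = 1 - P := eq_sub_of_add_eq' <| cfc_indicator_one_add_cfc_indicator_one T hdisj hσ
    (hind hK₁c hK₂c hdisj hσ) (hind hK₂c hK₁c hdisj.symm hσ')
  have hQP : Q.range = P.rangeᗮ := hQ ▸ hP.range_one_sub
  have hinv {S : H →L[ℂ] H} (f : ℂ → ℂ) (hS : ∀ g : ℂ → ℂ, Commute S (cfc g T)) :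
      ∀ x ∈ (cfc f T).range, S x ∈ (cfc f T).range := fun _ ↦ (hS f).apply_mem_range
  have hadj : ∀ f : ℂ → ℂ, Commute (ContinuousLinearMap.adjoint T) (cfc f T) := by
    simpa only [ContinuousLinearMap.star_eq_adjoint] using commute_star_cfc_self T
  have hcompl : IsCompl P.range Q.range :=
    hQ ▸ ContinuousLinearMap.IsIdempotentElem.isCompl_range_range_one_sub hP.isIdempotentElem
  have hT₁ := hinv (K₁.indicator 1) (commute_cfc_self T)
  have hT₂ := hinv (K₂.indicator 1) (commute_cfc_self T)
  obtain ⟨hspec₁, hspec₂⟩ := Set.eq_and_eq_of_union_subset_union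
    (spectrum_clmRestrict_range_cfc_indicator_subset T hK₁c hK₂c hdisj hσ hT₁)
    (spectrum_clmRestrict_range_cfc_indicator_subset T hK₂c hK₁c hdisj.symm hσ' hT₂) hdisj
    (hσ ▸ spectrum_subset_union_spectrum_clmRestrict hcompl hT₁ hT₂)
  refine ⟨P.range, Q.range, hT₁, hT₂,
    ContinuousLinearMap.IsIdempotentElem.isClosed_range hP.isIdempotentElem,
    hQP ▸ Submodule.isClosed_orthogonal _, hQP, hinv _ hadj, hinv _ hadj, hspec₁, hspec₂,
    P, fun x ↦ ⟨⟨x, rfl⟩, hQP ▸ hQ ▸ ⟨x, rfl⟩⟩, cfc_mem_elemental _ T⟩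

/-- Let `T` be a bounded normal operator on a complex Hilbert space with
`σ(T) = K₁ ∪ K₂`, where `K₁`, `K₂` are nonempty closed sets which are uniformly separated
by some `ε > 0`.  Then there are closed subspaces `V₁` and `V₂ = V₁ᗮ`, each invariant
under `T` and `T*`, such that the spectrum of the restriction of `T` to `Vᵢ` equals `Kᵢ`,
and the orthogonal projection onto `V₁` lies in the norm-closed unital *-subalgebra of
bounded operators generated by `T`. -/
theorem exists_reducing_decomposition_of_separated_spectrum {H : Type*}
    [NormedAddCommGroup H] [InnerProductSpace ℂ H] [CompleteSpace H]
    (T : H →L[ℂ] H) (hT : IsStarNormal T)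
    (K₁ K₂ : Set ℂ) (hK₁ : K₁.Nonempty) (hK₂ : K₂.Nonempty)
    (hK₁c : IsClosed K₁) (hK₂c : IsClosed K₂)
    (hσ : spectrum ℂ T = K₁ ∪ K₂)
    (ε : ℝ) (hε : 0 < ε) (hsep : ∀ μ₁ ∈ K₁, ∀ μ₂ ∈ K₂, ε < ‖μ₁ - μ₂‖) :
    ∃ (V₁ V₂ : Submodule ℂ H) (hV₁T : ∀ x ∈ V₁, T x ∈ V₁) (hV₂T : ∀ x ∈ V₂, T x ∈ V₂),
      IsClosed (V₁ : Set H) ∧ IsClosed (V₂ : Set H) ∧ V₂ = V₁ᗮ ∧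
      (∀ x ∈ V₁, ContinuousLinearMap.adjoint T x ∈ V₁) ∧
      (∀ x ∈ V₂, ContinuousLinearMap.adjoint T x ∈ V₂) ∧
      spectrum ℂ (clmRestrict T V₁ hV₁T) = K₁ ∧
      spectrum ℂ (clmRestrict T V₂ hV₂T) = K₂ ∧
      ∃ P : H →L[ℂ] H, (∀ x : H, P x ∈ V₁ ∧ x - P x ∈ V₁ᗮ) ∧
        P ∈ (StarAlgebra.adjoin ℂ {T}).topologicalClosure :=
  exists_reducing_decomposition_of_separated_spectrum_general T hT K₁ K₂ hK₁c hK₂c hσ ε hε hsep
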